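/- For n ≥ 1, the unsigned Stirling number of the first kind satisfies s(n,3) = ((n−1)!/2)·(H_{n−1}² − ζ_{n−1}(2)), where H_{n−1} = ∑_{j=1}^{n−1} 1/j and ζ_{n−1}(2) = ∑_{j=1}^{n−1} 1/j². -/

import Mathlib

open Finset

def stirling1 : ℕ → ℕ → ℕ
  | 0, 0 => 1
  | 0, _ + 1 => 0
  | _ + 1, 0 => 0
  | n + 1, k + 1 => n * stirling1 n (k + 1) + stirling1 n k

noncomputable def H (n : ℕ) : ℝ := ∑ j ∈ Icc 1 n, (1 : ℝ) / j

noncomputable def zp (k n : ℕ) : ℝ := ∑ j ∈ Icc 1 n, (1 : ℝ) / (j : ℝ) ^ k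

noncomputable def hzeta (s : ℕ) (a : ℝ) : ℝ := ∑' n : ℕ, 1 / ((n + 1 : ℝ) + a) ^ s

noncomputable def Z (s : ℕ) : ℝ := ∑' n : ℕ, 1 / ((n + 1 : ℝ)) ^ s

open Nat

/-! Induction on `n`: the closed forms for `s(n+1, k)`, `k = 1, 2, 3`, satisfy the recurrence `s(n+2, k+1) = (n+1) s(n+1, k+1) + s(n+1, k)`,
using `H (n+1) = H n + 1/(n+1)` and `ζ_{n+1}(2) = ζ_n(2) + 1/(n+1)²`. -/

lemma H_succ (n : ℕ) : H (n + 1) = H n + 1 / (n + 1 : ℝ) := by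
  simp [H, sum_Icc_succ_top (Nat.le_add_left 1 n)]

lemma zp_succ (k n : ℕ) : zp k (n + 1) = zp k n + 1 / (n + 1 : ℝ) ^ k := by
  simp [zp, sum_Icc_succ_top (Nat.le_add_left 1 n)]

lemma stirling1_succ_succ (n k : ℕ) :
    stirling1 (n + 1) (k + 1) = n * stirling1 n (k + 1) + stirling1 n k := rfl

lemma stirling1_succ_zero (n : ℕ) : stirling1 (n + 1) 0 = 0 := rfl

lemma stirling1_succ_one (n : ℕ) : stirling1 (n + 1) 1 = n ! := by
  induction n with
  | zero => rfl
  | succ n ih => rw [stirling1_succ_succ, ih, stirling1_succ_zero, Nat.factorial_succ]; ring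

lemma stirling1_succ_two (n : ℕ) : (stirling1 (n + 1) 2 : ℝ) = n ! * H n := by
  induction n with
  | zero => simp [stirling1, H]
  | succ n ih =>
    rw [stirling1_succ_succ, stirling1_succ_one]
    push_cast
    rw [ih, Nat.factorial_succ, H_succ]
    push_cast
    field_simp

lemma stirling1_succ_three (n : ℕ) :
    (stirling1 (n + 1) 3 : ℝ) = n ! / 2 * (H n ^ 2 - zp 2 n) := by
  induction n with
  | zero => simp [stirling1, H, zp]
  | succ n ih =>
    rw [stirling1_succ_succ]
    push_cast
    rw [ih, stirling1_succ_two, Nat.factorial_succ, H_succ, zp_succ]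
    push_cast
    field_simp
    ring

theorem stmt5_general (n : ℕ) :
    (stirling1 n 3 : ℝ) =
      (Nat.factorial (n - 1) : ℝ) / 2 * ((H (n - 1)) ^ 2 - zp 2 (n - 1)) := by
  cases n with
  | zero => simp [stirling1, H, zp]
  | succ n => exact stirling1_succ_three n

theorem stmt5 (n : ℕ) (hn : 1 ≤ n) :
    (stirling1 n 3 : ℝ) =
      (Nat.factorial (n - 1) : ℝ) / 2 * ((H (n - 1)) ^ 2 - zp 2 (n - 1)) :=
  stmt5_general n
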